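/- Suppose F : [0,T] × ℝⁿ → ℝ satisfies F(t,x) ≥ γ(|x|) for a.e. t and all x, where γ is convex, strictly increasing, continuous, with inverse γ⁻¹ on its range. Let Φ₀ ≤ 0 be a constant and set Ψ(u) = ∫₀ᵀ (Φ(u'(t)) + F(t,u(t))) dt where Φ ≥ Φ₀ pointwise (Φ(v) ≥ Φ(0) = Φ₀ being the minimum). If u ∈ K satisfies Ψ(u) ≤ r with r = c₀ + Φ₀·T, c₀ ≥ 0, then sup_{[0,T]} |u| ≤ L·T + γ⁻¹(c₀/T). -/

import Mathlib

/-!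
Since `Φ ≥ Φ₀` and `F(t, x) ≥ γ(|x|) ≥ γ(min |u|)` by monotonicity of `γ`, integrating gives
`T (Φ₀ + γ(min |u|)) ≤ Ψ(u) ≤ c₀ + Φ₀ T`, so `min |u| ≤ γ⁻¹(c₀ / T)`. The Lipschitz bound
on `[0, T]` then gives `sup |u| ≤ L T + min |u|`.
-/

open MeasureTheory Set

lemma norm_le_mul_add_norm_of_lipschitzOnWith_Icc {E : Type*} [SeminormedAddCommGroup E]
    {K : NNReal} {u : ℝ → E} {a b s t : ℝ} (hu : LipschitzOnWith K u (Icc a b))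
    (hs : s ∈ Icc a b) (ht : t ∈ Icc a b) : ‖u t‖ ≤ K * (b - a) + ‖u s‖ := by
  calc ‖u t‖ ≤ dist (u t) (u s) + ‖u s‖ := by
        rw [dist_eq_norm]; exact norm_le_norm_sub_add (u t) (u s)
    _ ≤ K * dist t s + ‖u s‖ := by gcongr; exact hu.dist_le_mul t ht s hs
    _ ≤ K * (b - a) + ‖u s‖ := by gcongr; exact Real.dist_le_of_mem_Icc ht hs

lemma mul_le_setIntegral_Icc_of_ae_le {f : ℝ → ℝ} {a b c : ℝ} (hab : a ≤ b)
    (hf : IntegrableOn f (Icc a b)) (h : ∀ᵐ t ∂(volume.restrict (Icc a b)), c ≤ f t) :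
    c * (b - a) ≤ ∫ t in Icc a b, f t := by
  have hconst : IntegrableOn (fun _ : ℝ => c) (Icc a b) := integrableOn_const measure_Icc_lt_top.ne
  calc c * (b - a) = ∫ _ in Icc a b, c := by
        rw [setIntegral_const, smul_eq_mul, Real.volume_real_Icc_of_le hab, mul_comm]
    _ ≤ ∫ t in Icc a b, f t := setIntegral_mono_ae_restrict hconst hf h

theorem stmt10_general (n : ℕ) (L T : ℝ) (hL : 0 < L) (hT : 0 < T)
    (γ : ℝ → ℝ)
    (hmono : StrictMonoOn γ (Ici 0))
    (γinv : ℝ → ℝ) (hγinv : ∀ s ∈ Ici (0:ℝ), γinv (γ s) = s)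
    (Φ : EuclideanSpace ℝ (Fin n) → ℝ) (Φ₀ : ℝ) (hΦmin : ∀ v, Φ₀ ≤ Φ v)
    (F : ℝ → EuclideanSpace ℝ (Fin n) → ℝ)
    (hF : ∀ᵐ t ∂(volume.restrict (Icc 0 T)), ∀ x, γ ‖x‖ ≤ F t x)
    (c₀ : ℝ) (hrange : ∃ s₀ ∈ Ici (0:ℝ), γ s₀ = c₀ / T)
    (u u' : ℝ → EuclideanSpace ℝ (Fin n))
    (hulip : LipschitzOnWith (Real.toNNReal L) u (Icc 0 T))
    (hint : IntegrableOn (fun t => Φ (u' t) + F t (u t)) (Icc 0 T))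
    (hlev : (∫ t in Icc (0:ℝ) T, (Φ (u' t) + F t (u t))) ≤ c₀ + Φ₀ * T) :
    ∀ t ∈ Icc (0:ℝ) T, ‖u t‖ ≤ L * T + γinv (c₀ / T) := by
  intro t ht
  obtain ⟨tm, htm, hmin⟩ := isCompact_Icc.exists_isMinOn (nonempty_Icc.2 hT.le)
    (continuous_norm.comp_continuousOn hulip.continuousOn)
  have hlow : ∀ᵐ s ∂(volume.restrict (Icc 0 T)), Φ₀ + γ ‖u tm‖ ≤ Φ (u' s) + F s (u s) := by
    filter_upwards [hF, ae_restrict_mem measurableSet_Icc] with s hFs hs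
    exact add_le_add (hΦmin _)
      ((hmono.monotoneOn (norm_nonneg _) (norm_nonneg _) (hmin hs)).trans (hFs _))
  have havg : γ ‖u tm‖ ≤ c₀ / T := by
    have := mul_le_setIntegral_Icc_of_ae_le hT.le hint hlow
    rw [le_div_iff₀ hT]
    linarith
  obtain ⟨s₀, hs₀, hγs₀⟩ := hrange
  have hmin_le : ‖u tm‖ ≤ γinv (c₀ / T) := by
    rw [← hγs₀, hγinv s₀ hs₀]
    exact (hmono.le_iff_le (norm_nonneg _) hs₀).1 (hγs₀ ▸ havg)
  calc ‖u t‖ ≤ L * (T - 0) + ‖u tm‖ := by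
        simpa [Real.coe_toNNReal _ hL.le] using
          norm_le_mul_add_norm_of_lipschitzOnWith_Icc hulip htm ht
    _ ≤ L * T + γinv (c₀ / T) := by rw [sub_zero]; gcongr

/-- The sup-norm bound on sub-level sets of `Ψ(u) = ∫₀ᵀ (Φ(u') + F(t,u)) dt`:
if `F(t,x) ≥ γ(|x|)`, `Φ ≥ Φ₀ = Φ(0)` and `Ψ(u) ≤ c₀ + Φ₀T`, then
`sup_{[0,T]} |u| ≤ LT + γ⁻¹(c₀/T)`. -/
theorem stmt10 (n : ℕ) (L T : ℝ) (hL : 0 < L) (hT : 0 < T)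
    (γ : ℝ → ℝ) (hconv : ConvexOn ℝ (Ici 0) γ)
    (hmono : StrictMonoOn γ (Ici 0)) (hcont : ContinuousOn γ (Ici 0))
    (γinv : ℝ → ℝ) (hγinv : ∀ s ∈ Ici (0:ℝ), γinv (γ s) = s)
    (Φ : EuclideanSpace ℝ (Fin n) → ℝ) (Φ₀ : ℝ) (hΦ₀ : Φ₀ ≤ 0)
    (hΦ0 : Φ (0 : EuclideanSpace ℝ (Fin n)) = Φ₀) (hΦmin : ∀ v, Φ₀ ≤ Φ v)
    (F : ℝ → EuclideanSpace ℝ (Fin n) → ℝ)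
    (hF : ∀ᵐ t ∂(volume.restrict (Icc 0 T)), ∀ x, γ ‖x‖ ≤ F t x)
    (c₀ : ℝ) (hc₀ : 0 ≤ c₀) (hrange : ∃ s₀ ∈ Ici (0:ℝ), γ s₀ = c₀ / T)
    (u u' : ℝ → EuclideanSpace ℝ (Fin n))
    (hulip : LipschitzOnWith (Real.toNNReal L) u (Icc 0 T)) (huper : u 0 = u T)
    (hud : ∀ᵐ t ∂(volume.restrict (Icc 0 T)), HasDerivAt u (u' t) t ∧ ‖u' t‖ ≤ L)
    (hint : IntegrableOn (fun t => Φ (u' t) + F t (u t)) (Icc 0 T))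
    (hlev : (∫ t in Icc (0:ℝ) T, (Φ (u' t) + F t (u t))) ≤ c₀ + Φ₀ * T) :
    ∀ t ∈ Icc (0:ℝ) T, ‖u t‖ ≤ L * T + γinv (c₀ / T) :=
  stmt10_general n L T hL hT γ hmono γinv hγinv Φ Φ₀ hΦmin F hF c₀ hrange u u' hulip hint hlev
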